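/- arXiv:0708.3960 — 3 statements merged into one kernel-verified Lean document; each statement's English description precedes it below -/
import Mathlib

section
/- Let {P_i}_{i=1}^N be a POVM, ρ a state with Tr[ρP_i] > 0 for all i, and X = X† an operator in span{P_i}. Among all dual families {D_i}, one minimizing the statistical error Σᵢ |Tr[D_i† X]|² Tr[ρ P_i] over all self-adjoint X can be chosen self-adjoint: for any dual {D_i}, the self-adjoint dual {(D_i + D_i†)/2} yields an error no larger than that of {D_i} for every self-adjoint X. -/
open Matrix ComplexOrder

private lemma span_conjTranspose_mem {d N : ℕ} (P : Fin N → Matrix (Fin d) (Fin d) ℂ)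
    (hP : ∀ i, (P i)ᴴ = P i) {X : Matrix (Fin d) (Fin d) ℂ}
    (hX : X ∈ Submodule.span ℂ (Set.range P)) :
    Xᴴ ∈ Submodule.span ℂ (Set.range P) := by
  induction hX using Submodule.span_induction with
  | mem x hx =>
    obtain ⟨i, rfl⟩ := hx
    rw [hP i]; exact Submodule.subset_span ⟨i, rfl⟩
  | zero => simpa using Submodule.zero_mem _
  | add x y _ _ hx hy => rw [conjTranspose_add]; exact Submodule.add_mem _ hx hy
  | smul c x _ hx => rw [conjTranspose_smul]; exact Submodule.smul_mem _ _ hx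

/-- for a POVM `{P i}`, a state `ρ` with `Tr[ρ P i] > 0`, and a dual family
`{D i}`, the symmetrized dual `{(D i + (D i)†)/2}` is again a dual family and, for every
self-adjoint `X`, its statistical error `∑ i |Tr[D i† X]|² Tr[ρ P i] - Tr[ρ X]²` is no
larger than that of `{D i}`; hence an optimal dual can be chosen self-adjoint. -/
theorem selfAdjoint_dual_has_smaller_error
    {d N : ℕ} (P : Fin N → Matrix (Fin d) (Fin d) ℂ)
    (hpos : ∀ i, (P i).PosSemidef) (hsum : ∑ i, P i = 1)
    (ρ : Matrix (Fin d) (Fin d) ℂ) (hρ : ρ.PosSemidef) (hρtr : ρ.trace = 1)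
    (hρP : ∀ i, 0 < ((ρ * P i).trace).re)
    (D : Fin N → Matrix (Fin d) (Fin d) ℂ)
    (hDmem : ∀ i, D i ∈ Submodule.span ℂ (Set.range P))
    (hDdual : ∀ X ∈ Submodule.span ℂ (Set.range P),
      ∑ i, ((P i)ᴴ * X).trace • D i = X) :
    ((∀ i, (2⁻¹ : ℂ) • (D i + (D i)ᴴ) ∈ Submodule.span ℂ (Set.range P)) ∧
      ∀ X ∈ Submodule.span ℂ (Set.range P),
        ∑ i, ((P i)ᴴ * X).trace • ((2⁻¹ : ℂ) • (D i + (D i)ᴴ)) = X) ∧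
    ∀ X : Matrix (Fin d) (Fin d) ℂ, Xᴴ = X →
      (∑ i, ‖((((2⁻¹ : ℂ) • (D i + (D i)ᴴ))ᴴ) * X).trace‖ ^ 2 * ((ρ * P i).trace).re)
          - (((ρ * X).trace).re) ^ 2 ≤
      (∑ i, ‖((D i)ᴴ * X).trace‖ ^ 2 * ((ρ * P i).trace).re)
          - (((ρ * X).trace).re) ^ 2 := by
  have hP : ∀ i, (P i)ᴴ = P i := fun i => (hpos i).1
  -- second dual identity
  have hDdual' : ∀ X ∈ Submodule.span ℂ (Set.range P),
      ∑ i, ((P i)ᴴ * X).trace • (D i)ᴴ = X := by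
    intro X hX
    have h1 := hDdual Xᴴ (span_conjTranspose_mem P hP hX)
    have h2 := congrArg conjTranspose h1
    rw [conjTranspose_conjTranspose] at h2
    have h3 : ∀ i, star ((P i)ᴴ * Xᴴ).trace = ((P i)ᴴ * X).trace := by
      intro i
      rw [← trace_conjTranspose, conjTranspose_mul, conjTranspose_conjTranspose,
        conjTranspose_conjTranspose, trace_mul_comm, hP i]
    calc ∑ i, ((P i)ᴴ * X).trace • (D i)ᴴ
        = ∑ i, star ((P i)ᴴ * Xᴴ).trace • (D i)ᴴ := by
          exact Finset.sum_congr rfl fun i _ => by rw [h3 i]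
      _ = (∑ i, ((P i)ᴴ * Xᴴ).trace • D i)ᴴ := by
          rw [conjTranspose_sum]
          exact Finset.sum_congr rfl fun i _ => by rw [conjTranspose_smul]
      _ = X := h2
  constructor
  · constructor
    · intro i
      exact Submodule.smul_mem _ _ (Submodule.add_mem _ (hDmem i)
        (span_conjTranspose_mem P hP (hDmem i)))
    · intro X hX
      have key : ∑ i, ((P i)ᴴ * X).trace • ((2⁻¹ : ℂ) • (D i + (D i)ᴴ)) =
          (2⁻¹ : ℂ) • ((∑ i, ((P i)ᴴ * X).trace • D i) +
            ∑ i, ((P i)ᴴ * X).trace • (D i)ᴴ) := by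
        rw [smul_add, Finset.smul_sum, Finset.smul_sum, ← Finset.sum_add_distrib]
        exact Finset.sum_congr rfl fun i _ => by module
      rw [key, hDdual X hX, hDdual' X hX]
      module
  · intro X hXsa
    apply sub_le_sub_right
    refine Finset.sum_le_sum fun i _ => ?_
    refine mul_le_mul_of_nonneg_right ?_ (hρP i).le
    refine pow_le_pow_left₀ (norm_nonneg _) ?_ 2
    have hstar : starRingEnd ℂ (((D i)ᴴ * X).trace) = (D i * X).trace := by
      rw [show (starRingEnd ℂ) (((D i)ᴴ * X).trace) = star (((D i)ᴴ * X).trace) from rfl,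
        ← trace_conjTranspose, conjTranspose_mul, conjTranspose_conjTranspose, hXsa,
        trace_mul_comm]
    have hcoef : ((((2⁻¹ : ℂ) • (D i + (D i)ᴴ))ᴴ) * X).trace
        = (((((D i)ᴴ * X).trace).re : ℝ) : ℂ) := by
      rw [conjTranspose_smul, conjTranspose_add, conjTranspose_conjTranspose,
        smul_mul_assoc, trace_smul, add_mul, trace_add, ← hstar]
      rw [Complex.add_conj, smul_eq_mul]
      rw [show star (2⁻¹ : ℂ) = 2⁻¹ by norm_num]
      push_cast
      ring
    rw [hcoef]
    calc ‖((((((D i)ᴴ * X).trace).re : ℝ)) : ℂ)‖ = |(((D i)ᴴ * X).trace).re| :=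
          Complex.norm_real _
      _ ≤ ‖((D i)ᴴ * X).trace‖ := Complex.abs_re_le_norm _
end

section
/- If a dual family {D_i} of a POVM {P_i} satisfies the optimality condition π Γ Λ = Λ† Γ† π, where π is the diagonal matrix with entries π_{ii} = Tr[ρ P_i] and (ΓΛ)_{ij} = Tr[D_i† P_j], then Tr[D_i] = 1 for every i with Tr[ρ P_i] ≠ 0. -/
open Matrix ComplexOrder

/-- if a dual family `{D i}` of a POVM `{P i}` satisfies the optimality
condition `π Γ Λ = Λ† Γ† π`, i.e. `Tr[ρ P i] Tr[D i† P j] = Tr[P i D j] Tr[ρ P j]`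
for all `i, j`, then `Tr[D i] = 1` for every `i` with `Tr[ρ P i] ≠ 0`. -/
theorem optimal_dual_trace_one
    {d N : ℕ} (P : Fin N → Matrix (Fin d) (Fin d) ℂ)
    (hpos : ∀ i, (P i).PosSemidef) (hsum : ∑ i, P i = 1)
    (ρ : Matrix (Fin d) (Fin d) ℂ) (hρ : ρ.PosSemidef) (hρtr : ρ.trace = 1)
    (D : Fin N → Matrix (Fin d) (Fin d) ℂ)
    (hDmem : ∀ i, D i ∈ Submodule.span ℂ (Set.range P))
    (hDdual : ∀ X ∈ Submodule.span ℂ (Set.range P),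
      ∑ i, (((D i)ᴴ * X).trace) • P i = X)
    (hopt : ∀ i j, ((ρ * P i).trace) * (((D i)ᴴ * P j).trace)
      = ((P i * D j).trace) * ((ρ * P j).trace)) :
    ∀ i, (ρ * P i).trace ≠ 0 → (D i).trace = 1 := by
  intro j hj
  have hPj : P j ∈ Submodule.span ℂ (Set.range P) :=
    Submodule.subset_span ⟨j, rfl⟩
  have h1 : ∑ i, (((D i)ᴴ * P j).trace) • P i = P j := hDdual _ hPj
  have h2 : (ρ * P j).trace = ∑ i, (((D i)ᴴ * P j).trace) * (ρ * P i).trace := by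
    calc (ρ * P j).trace = (ρ * ∑ i, (((D i)ᴴ * P j).trace) • P i).trace := by rw [h1]
    _ = ∑ i, (((D i)ᴴ * P j).trace) * (ρ * P i).trace := by
        rw [Finset.mul_sum, trace_sum]
        refine Finset.sum_congr rfl fun i _ => ?_
        rw [Matrix.mul_smul, trace_smul, smul_eq_mul]
  have h3 : (ρ * P j).trace = (D j).trace * (ρ * P j).trace := by
    refine h2.trans ?_
    have key : ∀ i, (((D i)ᴴ * P j).trace) * (ρ * P i).trace
        = ((P i * D j).trace) * ((ρ * P j).trace) := fun i => by
      rw [mul_comm]; exact hopt i j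
    simp_rw [key]
    rw [← Finset.sum_mul]
    congr 1
    calc ∑ i, (P i * D j).trace = ((∑ i, P i) * D j).trace := by
          rw [Finset.sum_mul, trace_sum]
    _ = (D j).trace := by rw [hsum, one_mul]
  exact mul_right_cancel₀ hj (h3.symm.trans (one_mul _).symm)
end

section
/- Let {P_i}_{i=1}^N be a POVM and {Q_j}_{j=1}^M ⊆ span{P_i} another POVM, with processing coefficients c_i^{Q_j} satisfying Σᵢ c_i^{Q_j} Tr[ρP_i] = Tr[ρQ_j] for all states ρ and Σⱼ c_i^{Q_j} = 1 for all i. Define ε* = −M c̄ /(1 − M c̄) with c̄ = min{0, min_{i,j} c_i^{Q_j}}, and Q_j(ε*) = (1−ε*) Q_j + ε* I/M. Then {Q_j(ε*)} is a POVM and is a post-processing of {P_i} via the Markov matrix m(j|i) = (1−ε*) c_i^{Q_j} + ε*/M. -/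
/-!
Testing against pure states separates matrices (by polarization), so the processing identity
forces `Q j = ∑ i, c i j • P i`. With `K = 1 - M c̄ ≥ 1`, the smeared coefficients are
`(1 - ε*) c i j + ε*/M = (c i j - c̄) / K`, which are nonnegative and sum to `1` over `j`;
hence `Q(ε*)` is a Markov post-processing of `P`, and such a post-processing of a POVM is a POVM.
-/

open Matrix ComplexOrder

namespace Matrix

variable {n : Type*} [Fintype n]

lemma eq_zero_of_forall_star_dotProduct_mulVec_eq_zero [DecidableEq n] {A : Matrix n n ℂ}
    (h : ∀ v, star v ⬝ᵥ A *ᵥ v = 0) : A = 0 := by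
  rw [← map_eq_zero_iff _ (toEuclideanLin (𝕜 := ℂ) (m := n) (n := n)).injective,
    ← inner_map_self_eq_zero]
  intro x
  rw [← inner_conj_symm, map_eq_zero, EuclideanSpace.inner_eq_star_dotProduct, ofLp_toLpLin,
    toLin'_apply, dotProduct_comm, h]

lemma trace_vecMulVec_star_mul (v : n → ℂ) (A : Matrix n n ℂ) :
    (vecMulVec v (star v) * A).trace = star v ⬝ᵥ A *ᵥ v := by
  rw [trace_mul_comm, mul_vecMulVec, trace_vecMulVec, dotProduct_comm]

lemma eq_of_forall_trace_mul_eq [DecidableEq n] {A B : Matrix n n ℂ}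
    (h : ∀ ρ : Matrix n n ℂ, ρ.PosSemidef → ρ.trace = 1 → (ρ * A).trace = (ρ * B).trace) :
    A = B := by
  rw [← sub_eq_zero]
  refine eq_zero_of_forall_star_dotProduct_mulVec_eq_zero fun v => ?_
  obtain rfl | hv := eq_or_ne v 0
  · simp
  set t := star v ⬝ᵥ v
  have ht : t ≠ 0 := dotProduct_star_self_eq_zero.not.mpr hv
  have hρ : (t⁻¹ • vecMulVec v (star v)).PosSemidef :=
    (posSemidef_vecMulVec_self_star v).smul (inv_nonneg.mpr (dotProduct_star_self_nonneg v))
  have htr : (t⁻¹ • vecMulVec v (star v)).trace = 1 := by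
    rw [trace_smul, trace_vecMulVec, dotProduct_comm, smul_eq_mul, inv_mul_cancel₀ ht]
  have := h _ hρ htr
  simp only [smul_mul, trace_smul, trace_vecMulVec_star_mul, smul_eq_mul] at this
  rw [sub_mulVec, dotProduct_sub, mul_left_cancel₀ (inv_ne_zero ht) this, sub_self]

end Matrix

def IsPOVM {ι n : Type*} [Fintype ι] [Fintype n] [DecidableEq n] (E : ι → Matrix n n ℂ) : Prop :=
  (∀ i, (E i).PosSemidef) ∧ ∑ i, E i = 1

theorem IsPOVM.postProcessing {ι κ n : Type*} [Fintype ι] [Fintype κ] [Fintype n] [DecidableEq n]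
    {P : ι → Matrix n n ℂ} (hP : IsPOVM P) {m : ι → κ → ℝ} (hm_nonneg : ∀ i j, 0 ≤ m i j)
    (hm_sum : ∀ i, ∑ j, m i j = 1) : IsPOVM fun j => ∑ i, (m i j : ℂ) • P i := by
  refine ⟨fun j => posSemidef_sum _ fun i _ => (hP.1 i).smul ?_, ?_⟩
  · exact_mod_cast hm_nonneg i j
  · rw [Finset.sum_comm]
    simp_rw [← Finset.sum_smul, ← Complex.ofReal_sum, hm_sum, Complex.ofReal_one, one_smul, hP.2]

lemma smearing_coeff_eq {M cbar ε : ℝ} (hM : M ≠ 0) (hK : 1 - M * cbar ≠ 0)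
    (hε : ε = -(M * cbar) / (1 - M * cbar)) (x : ℝ) :
    (1 - ε) * x + ε / M = (x - cbar) / (1 - M * cbar) := by
  subst hε
  field_simp
  ring

theorem smeared_povm_is_postProcessing_general {d N M : ℕ} (hM : 0 < M)
    (P : Fin N → Matrix (Fin d) (Fin d) ℂ)
    (hP : ∀ i, (P i).PosSemidef) (hPsum : ∑ i, P i = 1)
    (Q : Fin M → Matrix (Fin d) (Fin d) ℂ)
    (c : Fin N → Fin M → ℝ)
    (hc : ∀ ρ : Matrix (Fin d) (Fin d) ℂ, ρ.PosSemidef → ρ.trace = 1 →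
      ∀ j, ∑ i, (c i j : ℂ) * (ρ * P i).trace = (ρ * Q j).trace)
    (hcnorm : ∀ i, ∑ j, c i j = 1)
    (cbar : ℝ)
    (hcbar : cbar ≤ 0 ∧ (∀ i j, cbar ≤ c i j) ∧ (cbar = 0 ∨ ∃ i j, cbar = c i j))
    (ε : ℝ) (hε : ε = -((M : ℝ) * cbar) / (1 - (M : ℝ) * cbar)) :
    (∀ j, ((1 - ε : ℂ) • Q j + ((ε / M : ℝ) : ℂ) • (1 : Matrix (Fin d) (Fin d) ℂ)).PosSemidef) ∧
    (∑ j, ((1 - ε : ℂ) • Q j + ((ε / M : ℝ) : ℂ) • (1 : Matrix (Fin d) (Fin d) ℂ)) = 1) ∧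
    (∀ j i, 0 ≤ (1 - ε) * c i j + ε / M) ∧
    (∀ i, ∑ j, ((1 - ε) * c i j + ε / M) = 1) ∧
    (∀ j, (1 - ε : ℂ) • Q j + ((ε / M : ℝ) : ℂ) • (1 : Matrix (Fin d) (Fin d) ℂ)
      = ∑ i, (((1 - ε) * c i j + ε / M : ℝ) : ℂ) • P i) := by
  obtain ⟨hcbar_nonpos, hcbar_le, -⟩ := hcbar
  have hQ_eq (j : Fin M) : Q j = ∑ i, (c i j : ℂ) • P i :=
    eq_of_forall_trace_mul_eq fun ρ hρ htr => by
      simp only [← hc ρ hρ htr j, Matrix.mul_sum, trace_sum, Matrix.mul_smul, trace_smul,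
        smul_eq_mul]
  have hK : 0 < 1 - (M : ℝ) * cbar := by nlinarith [(Nat.cast_pos (α := ℝ)).2 hM]
  have hm (i : Fin N) (j : Fin M) := smearing_coeff_eq (Nat.cast_ne_zero.2 hM.ne') hK.ne' hε (c i j)
  have hm_nonneg (j : Fin M) (i : Fin N) : 0 ≤ (1 - ε) * c i j + ε / M := by
    rw [hm]
    exact div_nonneg (sub_nonneg.2 (hcbar_le i j)) hK.le
  have hm_sum (i : Fin N) : ∑ j, ((1 - ε) * c i j + ε / M) = 1 := by
    simp_rw [hm, ← Finset.sum_div, Finset.sum_sub_distrib, hcnorm, Finset.sum_const,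
      Finset.card_univ, Fintype.card_fin, nsmul_eq_mul]
    exact div_self hK.ne'
  have hpost (j : Fin M) : (1 - ε : ℂ) • Q j + ((ε / M : ℝ) : ℂ) • (1 : Matrix (Fin d) (Fin d) ℂ)
      = ∑ i, (((1 - ε) * c i j + ε / M : ℝ) : ℂ) • P i := by
    simp only [hQ_eq j, ← hPsum, Finset.smul_sum, ← Finset.sum_add_distrib, smul_smul, ← add_smul]
    push_cast
    rfl
  obtain ⟨hpsd, hsum⟩ := IsPOVM.postProcessing ⟨hP, hPsum⟩ (fun i j => hm_nonneg j i) hm_sum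
  refine ⟨?_, ?_, hm_nonneg, hm_sum, hpost⟩ <;> simpa only [hpost]

/-- given a POVM `{P i}`, another POVM `{Q j}` with processing
coefficients `c i j` (`∑ i c i j Tr[ρ P i] = Tr[ρ Q j]` for all states `ρ`, and
`∑ j c i j = 1`), setting `c̄ = min {0, min c}`, `ε* = -M c̄ / (1 - M c̄)` and
`Q j (ε*) = (1 - ε*) Q j + (ε*/M) I`, the family `{Q j (ε*)}` is a POVM and is a
post-processing of `{P i}` via the Markov matrix `m j i = (1 - ε*) c i j + ε*/M`. -/
theorem smeared_povm_is_postProcessing {d N M : ℕ} (hM : 0 < M)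
    (P : Fin N → Matrix (Fin d) (Fin d) ℂ)
    (hP : ∀ i, (P i).PosSemidef) (hPsum : ∑ i, P i = 1)
    (Q : Fin M → Matrix (Fin d) (Fin d) ℂ)
    (hQ : ∀ j, (Q j).PosSemidef) (hQsum : ∑ j, Q j = 1)
    (c : Fin N → Fin M → ℝ)
    (hc : ∀ ρ : Matrix (Fin d) (Fin d) ℂ, ρ.PosSemidef → ρ.trace = 1 →
      ∀ j, ∑ i, (c i j : ℂ) * (ρ * P i).trace = (ρ * Q j).trace)
    (hcnorm : ∀ i, ∑ j, c i j = 1)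
    (cbar : ℝ)
    (hcbar : cbar ≤ 0 ∧ (∀ i j, cbar ≤ c i j) ∧ (cbar = 0 ∨ ∃ i j, cbar = c i j))
    (ε : ℝ) (hε : ε = -((M : ℝ) * cbar) / (1 - (M : ℝ) * cbar)) :
    (∀ j, ((1 - ε : ℂ) • Q j + ((ε / M : ℝ) : ℂ) • (1 : Matrix (Fin d) (Fin d) ℂ)).PosSemidef) ∧
    (∑ j, ((1 - ε : ℂ) • Q j + ((ε / M : ℝ) : ℂ) • (1 : Matrix (Fin d) (Fin d) ℂ)) = 1) ∧
    (∀ j i, 0 ≤ (1 - ε) * c i j + ε / M) ∧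
    (∀ i, ∑ j, ((1 - ε) * c i j + ε / M) = 1) ∧
    (∀ j, (1 - ε : ℂ) • Q j + ((ε / M : ℝ) : ℂ) • (1 : Matrix (Fin d) (Fin d) ℂ)
      = ∑ i, (((1 - ε) * c i j + ε / M : ℝ) : ℂ) • P i) :=
  smeared_povm_is_postProcessing_general hM P hP hPsum Q c hc hcnorm cbar hcbar ε hε
end
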